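/- For all real x, the standard normal CDF Φ satisfies -x·φ(x)·Φ(x) - φ(x)² + Φ(x)² ≥ 0, where φ is the standard normal PDF. -/

import Mathlib

open Real Set

noncomputable def stdNormalPDF (t : ℝ) : ℝ := (Real.sqrt (2 * Real.pi))⁻¹ * Real.exp (-t ^ 2 / 2)

noncomputable def stdNormalCDF (x : ℝ) : ℝ := ∫ t in Set.Iic x, stdNormalPDF t

/-!
Cauchy–Schwarz for the weight `φ` on `(-∞, x]` gives `(∫ t φ)² ≤ (∫ φ) (∫ t² φ)`.
Since `φ' = -t φ`, the two moments are `∫_{-∞}^x t φ = -φ(x)` and, integrating by parts,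
`∫_{-∞}^x t² φ = Φ(x) - x φ(x)`; so the inequality reads `φ(x)² ≤ Φ(x) (Φ(x) - x φ(x))`.
-/

open MeasureTheory Filter Topology

theorem sq_integral_mul_le_integral_mul_integral_sq_mul {α : Type*} [MeasurableSpace α]
    {μ : Measure α} {f w : α → ℝ} (hw : 0 ≤ w) (hw_int : Integrable w μ)
    (hfw_int : Integrable (fun a => f a * w a) μ)
    (hf2w_int : Integrable (fun a => f a ^ 2 * w a) μ) :
    (∫ a, f a * w a ∂μ) ^ 2 ≤ (∫ a, w a ∂μ) * ∫ a, f a ^ 2 * w a ∂μ := by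
  set A := ∫ a, w a ∂μ
  set B := ∫ a, f a * w a ∂μ
  set C := ∫ a, f a ^ 2 * w a ∂μ
  have quadratic_nonneg (l : ℝ) : 0 ≤ A * (l * l) + (-2 * B) * l + C := by
    have h_expand : ∫ a, (l - f a) ^ 2 * w a ∂μ = A * (l * l) + (-2 * B) * l + C := by
      have h_eq : (fun a => (l - f a) ^ 2 * w a)
          = fun a => (l ^ 2 * w a - 2 * l * (f a * w a)) + f a ^ 2 * w a := by
        funext a; ring
      have h_lin_int : Integrable (fun a => l ^ 2 * w a - 2 * l * (f a * w a)) μ :=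
        (hw_int.const_mul _).sub (hfw_int.const_mul _)
      rw [h_eq, integral_add h_lin_int hf2w_int,
        integral_sub (hw_int.const_mul _) (hfw_int.const_mul _),
        integral_const_mul, integral_const_mul]
      ring
    rw [← h_expand]
    exact integral_nonneg fun a => mul_nonneg (sq_nonneg _) (hw a)
  have h_discrim := discrim_le_zero quadratic_nonneg
  rw [discrim] at h_discrim
  linarith

theorem stdNormalPDF_nonneg : 0 ≤ stdNormalPDF := fun t => by
  unfold stdNormalPDF
  positivity

theorem stdNormalPDF_eq (t : ℝ) :
    stdNormalPDF t = (√(2 * π))⁻¹ * rexp (-(1 / 2) * t ^ 2) := by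
  unfold stdNormalPDF
  ring_nf

theorem hasDerivAt_stdNormalPDF (t : ℝ) : HasDerivAt stdNormalPDF (-t * stdNormalPDF t) t := by
  have h_exponent : HasDerivAt (fun s : ℝ => -s ^ 2 / 2) (-t) t := by
    refine ((hasDerivAt_pow 2 t).neg.div_const 2).congr_deriv ?_
    push_cast
    ring
  refine (h_exponent.exp.const_mul (√(2 * π))⁻¹).congr_deriv ?_
  unfold stdNormalPDF
  ring

theorem integrable_pow_mul_stdNormalPDF (n : ℕ) :
    Integrable fun t : ℝ => t ^ n * stdNormalPDF t := by
  have h := (integrable_rpow_mul_exp_neg_mul_sq (by norm_num : (0 : ℝ) < 1 / 2)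
    (neg_one_lt_zero.trans_le n.cast_nonneg)).const_mul (√(2 * π))⁻¹
  refine h.congr (Eventually.of_forall fun t => ?_)
  simp only [stdNormalPDF_eq, rpow_natCast]
  ring

theorem integrable_stdNormalPDF : Integrable stdNormalPDF := by
  simpa using integrable_pow_mul_stdNormalPDF 0

theorem integrable_mul_stdNormalPDF : Integrable fun t : ℝ => t * stdNormalPDF t := by
  simpa using integrable_pow_mul_stdNormalPDF 1

theorem tendsto_pow_mul_stdNormalPDF_atBot (n : ℕ) :
    Tendsto (fun t : ℝ => t ^ n * stdNormalPDF t) atBot (𝓝 0) := by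
  have h := ((tendsto_rpow_abs_mul_exp_neg_mul_sq_cocompact (by norm_num : (0 : ℝ) < 1 / 2)
    n).mono_left atBot_le_cocompact).const_mul (√(2 * π))⁻¹
  rw [mul_zero] at h
  refine squeeze_zero_norm (fun t => le_of_eq ?_) h
  rw [norm_mul, norm_pow, Real.norm_eq_abs, rpow_natCast, stdNormalPDF_eq,
    Real.norm_of_nonneg (by positivity)]
  ring

theorem integral_Iic_mul_stdNormalPDF (x : ℝ) :
    ∫ t in Iic x, t * stdNormalPDF t = -stdNormalPDF x := by
  have h_deriv (t : ℝ) : HasDerivAt (fun s => -stdNormalPDF s) (t * stdNormalPDF t) t := by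
    refine (hasDerivAt_stdNormalPDF t).neg.congr_deriv ?_
    ring
  have h_lim : Tendsto (fun s => -stdNormalPDF s) atBot (𝓝 0) := by
    simpa using (tendsto_pow_mul_stdNormalPDF_atBot 0).neg
  simpa using integral_Iic_of_hasDerivAt_of_tendsto' (fun t _ => h_deriv t)
    integrable_mul_stdNormalPDF.integrableOn h_lim

theorem integral_Iic_sq_mul_stdNormalPDF (x : ℝ) :
    ∫ t in Iic x, t ^ 2 * stdNormalPDF t = stdNormalCDF x - x * stdNormalPDF x := by
  have h_deriv (t : ℝ) :
      HasDerivAt (fun s => -s * stdNormalPDF s) ((t ^ 2 - 1) * stdNormalPDF t) t := by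
    refine ((hasDerivAt_id t).neg.mul (hasDerivAt_stdNormalPDF t)).congr_deriv ?_
    simp only [Pi.neg_apply, id]
    ring
  have h_lim : Tendsto (fun s => -s * stdNormalPDF s) atBot (𝓝 0) := by
    simpa using (tendsto_pow_mul_stdNormalPDF_atBot 1).neg
  have h_int : Integrable fun t : ℝ => (t ^ 2 - 1) * stdNormalPDF t := by
    simp only [sub_mul, one_mul]
    exact (integrable_pow_mul_stdNormalPDF 2).sub integrable_stdNormalPDF
  have h_shifted : ∫ t in Iic x, (t ^ 2 - 1) * stdNormalPDF t = -x * stdNormalPDF x := by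
    simpa using integral_Iic_of_hasDerivAt_of_tendsto' (fun t _ => h_deriv t)
      h_int.integrableOn h_lim
  have h_split : (fun t : ℝ => t ^ 2 * stdNormalPDF t)
      = fun t => (t ^ 2 - 1) * stdNormalPDF t + stdNormalPDF t := by
    funext t; ring
  rw [h_split, integral_add h_int.integrableOn integrable_stdNormalPDF.integrableOn,
    h_shifted, stdNormalCDF]
  ring

/-- `-x φ(x) Φ(x) - φ(x)² + Φ(x)² ≥ 0` for all real `x`. -/
theorem stmt1 (x : ℝ) :
    -x * stdNormalPDF x * stdNormalCDF x - (stdNormalPDF x) ^ 2 + (stdNormalCDF x) ^ 2 ≥ 0 := by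
  have h := sq_integral_mul_le_integral_mul_integral_sq_mul (μ := volume.restrict (Iic x))
    (f := fun t => t) stdNormalPDF_nonneg integrable_stdNormalPDF.integrableOn
    integrable_mul_stdNormalPDF.integrableOn
    (integrable_pow_mul_stdNormalPDF 2).integrableOn
  rw [integral_Iic_mul_stdNormalPDF, integral_Iic_sq_mul_stdNormalPDF, ← stdNormalCDF] at h
  linarith
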